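/- With notation as above (recurrence of minimal order M over a field k', q(X) = 1 − r_1X − ⋯ − r_M X^M, numerators p_t), the polynomials p_t(X) and q(X) are relatively prime in k'[X]: if α were a common root of p_{t_0} and q in an algebraic closure, then p_t(α) = 0 for all t ≥ t_0, forcing the columns of the nonsingular Hankel matrix C_{t_0} to be linearly dependent, a contradiction. -/

import Mathlib

/-!
Write `p_t` for the numerators and `q` for the denominator. The recurrence gives the polynomial
identity `p_t = c_t q + X p_{t+1}`, and `q(0) = 1`. So a common root `α` of `p_t` and `q` in an
algebraic closure is nonzero and is a root of every `p_{t+n}`. The coefficients of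
`p_t, …, p_{t+M-1}` form a matrix which is the Hankel matrix `C_t` times a unitriangular matrix,
hence is nonsingular; but it kills the nonzero vector `(1, α, …, α^{M-1})`.
-/

open Polynomial Finset
open scoped Matrix

section RationalGeneratingFunction

variable {K : Type*} [Field K] (M : ℕ) (r : ℕ → K) (c : ℤ → K)

noncomputable def numeratorPoly (t : ℤ) : K[X] :=
  ∑ j ∈ range M, C (c (t + j) - ∑ i ∈ range j, r (i + 1) * c (t + j - (i + 1))) * X ^ j

noncomputable def denominatorPoly : K[X] :=
  1 - ∑ i ∈ range M, C (r (i + 1)) * X ^ (i + 1)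

def hankelMatrix (t : ℤ) : Matrix (Fin M) (Fin M) K :=
  Matrix.of fun i j => c (t + i + j)

/-- Row `i` holds the coefficients of `numeratorPoly M r c (t + i)`. -/
def numeratorMatrix (t : ℤ) : Matrix (Fin M) (Fin M) K :=
  Matrix.of fun i j => c (t + i + j) - ∑ m ∈ range j, r (m + 1) * c (t + i + j - (m + 1))

def upperToeplitz : Matrix (Fin M) (Fin M) K :=
  Matrix.of fun k j => if k < j then r (j - k : ℕ) else 0

lemma coeff_numeratorPoly (t : ℤ) (n : ℕ) :
    (numeratorPoly M r c t).coeff n =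
      if n < M then c (t + n) - ∑ i ∈ range n, r (i + 1) * c (t + n - (i + 1)) else 0 := by
  simp only [numeratorPoly, finsetSum_coeff, coeff_C_mul_X_pow]
  simp [sum_ite_eq]

lemma coeff_denominatorPoly_zero : (denominatorPoly M r).coeff 0 = 1 := by
  simp [denominatorPoly]

lemma coeff_denominatorPoly_succ (n : ℕ) :
    (denominatorPoly M r).coeff (n + 1) = if n < M then -r (n + 1) else 0 := by
  split_ifs <;> simp [denominatorPoly, coeff_one, *]

lemma numeratorPoly_eq_C_mul_denominatorPoly_add_X_mul
    (hrec : ∀ n : ℤ, c n = ∑ i ∈ range M, r (i + 1) * c (n - (i + 1))) (t : ℤ) :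
    numeratorPoly M r c t = C (c t) * denominatorPoly M r + X * numeratorPoly M r c (t + 1) := by
  ext (_ | n)
  · rcases M.eq_zero_or_pos with rfl | hM
    · simp [numeratorPoly, hrec t]
    · simp [coeff_numeratorPoly, coeff_denominatorPoly_zero, hM]
  rw [coeff_add, coeff_C_mul, coeff_X_mul, coeff_numeratorPoly, coeff_numeratorPoly,
    coeff_denominatorPoly_succ, sum_range_succ]
  push_cast
  have hshift : t + 1 + n = t + (n + 1) := by ring
  rw [hshift, add_sub_cancel_right]
  rcases lt_trichotomy (n + 1) M with h | rfl | h
  · simp only [h, Nat.lt_of_succ_lt h, if_true]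
    ring
  · simp only [lt_irrefl, Nat.lt_succ_self, if_true, if_false]
    have hrecM := hrec (t + (n + 1))
    rw [sum_range_succ, add_sub_cancel_right] at hrecM
    linear_combination -hrecM
  · simp [not_lt.2 h.le, not_lt.2 (Nat.le_of_lt_succ h)]

lemma hankelMatrix_mul_upperToeplitz_apply (t : ℤ) (i j : Fin M) :
    (hankelMatrix M c t * upperToeplitz M r) i j =
      ∑ m ∈ range j, r (m + 1) * c (t + i + j - (m + 1)) := by
  rw [Matrix.mul_apply]
  simp only [hankelMatrix, upperToeplitz, Matrix.of_apply, Fin.lt_def]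
  rw [Fin.sum_univ_eq_sum_range (fun k => c (t + i + k) * if k < j then r (j - k) else 0)]
  have hfilter : (range M).filter (· < (j : ℕ)) = range j := by
    ext k; simp only [mem_filter, mem_range]; omega
  simp_rw [mul_ite, mul_zero]
  rw [← sum_filter, hfilter, ← sum_range_reflect]
  refine sum_congr rfl fun k hk => ?_
  rw [mem_range] at hk
  rw [mul_comm, show (j : ℕ) - (j - 1 - k) = k + 1 by omega]
  congr 2
  omega

lemma numeratorMatrix_eq_hankelMatrix_mul (t : ℤ) :
    numeratorMatrix M r c t = hankelMatrix M c t * (1 - upperToeplitz M r) := by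
  ext i j
  rw [Matrix.mul_sub, Matrix.mul_one, Matrix.sub_apply, hankelMatrix_mul_upperToeplitz_apply]
  rfl

lemma det_one_sub_upperToeplitz : (1 - upperToeplitz M r).det = 1 := by
  rw [Matrix.det_of_isUpperTriangular]
  · simp [upperToeplitz]
  · intro i j (hji : j < i)
    simp [upperToeplitz, Matrix.one_apply_ne hji.ne', not_lt.2 hji.le]

lemma det_numeratorMatrix (t : ℤ) : (numeratorMatrix M r c t).det = (hankelMatrix M c t).det := by
  rw [numeratorMatrix_eq_hankelMatrix_mul, Matrix.det_mul, det_one_sub_upperToeplitz, mul_one]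

variable {L : Type*} [CommRing L] [Algebra K L]

lemma aeval_numeratorPoly_eq_mulVec (t : ℤ) (α : L) (i : Fin M) :
    aeval α (numeratorPoly M r c (t + i)) =
      ((numeratorMatrix M r c t).map (algebraMap K L) *ᵥ fun j => α ^ (j : ℕ)) i := by
  simp only [numeratorPoly, numeratorMatrix, map_sub, map_sum, map_mul, aeval_C, map_pow, aeval_X,
    Matrix.mulVec, dotProduct, Matrix.map_apply, Matrix.of_apply]
  exact (Fin.sum_univ_eq_sum_range _ M).symm

lemma aeval_numeratorPoly_add_eq_zero [IsDomain L]
    (hrec : ∀ n : ℤ, c n = ∑ i ∈ range M, r (i + 1) * c (n - (i + 1)))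
    {α : L} (hq : aeval α (denominatorPoly M r) = 0) {t : ℤ}
    (hp : aeval α (numeratorPoly M r c t) = 0) (n : ℕ) :
    aeval α (numeratorPoly M r c (t + n)) = 0 := by
  have hα : α ≠ 0 := by
    rintro rfl
    simp [denominatorPoly] at hq
  induction n with
  | zero => simpa using hp
  | succ n ih =>
    have hstep := congrArg (aeval α)
      (numeratorPoly_eq_C_mul_denominatorPoly_add_X_mul M r c hrec (t + n))
    rw [map_add, map_mul, map_mul, hq, mul_zero, zero_add, aeval_X, ih, eq_comm,
      mul_eq_zero] at hstep
    push_cast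
    rw [← add_assoc]
    exact hstep.resolve_left hα

end RationalGeneratingFunction

theorem numerator_denominator_coprime
    (k' : Type*) [Field k'] (M : ℕ) (hM : 0 < M) (r : ℕ → k')
    (c : ℤ → k') (n₀ : ℤ)
    (hrec : ∀ n : ℤ, c n = ∑ i ∈ Finset.range M, r (i + 1) * c (n - (i + 1)))
    (hmin : ∀ n : ℤ, (Matrix.of fun i j : Fin M => c (n + i + j)).det ≠ 0) :
    ∀ t : ℤ, n₀ ≤ t →
      IsCoprime
        (∑ j ∈ Finset.range M,
          C (c (t + j) - ∑ i ∈ Finset.range j, r (i + 1) * c (t + j - (i + 1))) *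
            X ^ j : Polynomial k')
        (1 - ∑ i ∈ Finset.range M, C (r (i + 1)) * X ^ (i + 1) : Polynomial k') := by
  intro t _
  change IsCoprime (numeratorPoly M r c t) (denominatorPoly M r)
  rw [isCoprime_iff_aeval_ne_zero_of_isAlgClosed k' (AlgebraicClosure k')]
  by_contra! ⟨α, hp, hq⟩
  have hA : ((numeratorMatrix M r c t).map (algebraMap k' (AlgebraicClosure k'))).det ≠ 0 := by
    rw [← RingHom.mapMatrix_apply, ← RingHom.map_det, det_numeratorMatrix]
    exact (_root_.map_ne_zero _).2 (hmin t)
  have hkernel :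
      (numeratorMatrix M r c t).map (algebraMap k' _) *ᵥ (fun j => α ^ (j : ℕ)) = 0 := by
    funext i
    rw [← aeval_numeratorPoly_eq_mulVec]
    exact aeval_numeratorPoly_add_eq_zero M r c hrec hq hp i
  refine hA (Matrix.exists_mulVec_eq_zero_iff.1 ⟨_, fun h => ?_, hkernel⟩)
  simpa using congrFun h ⟨0, hM⟩
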